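/- arXiv:2107.00790 — 2 statements merged into one kernel-verified Lean document; each statement's English description precedes it below -/
import Mathlib

section
/- Nonlinearity estimate in Lorentz spaces: let n ∈ ℕ, 0 < b < min{2, n}, 0 < σ ≤ (4−2b)/n, and r = n(σ+2)/(n−b). Then 1/r' = (σ+1)/r + b/n, and for any u ∈ L^{r,2}(ℝ^n), ‖|x|^{-b} |u|^σ u‖_{L^{r',2}(ℝ^n)} ≲ ‖u‖_{L^{r,2}(ℝ^n)}^{σ+1}. -/
open MeasureTheory ENNReal Set Filter

noncomputable section

abbrev Rn (n : ℕ) := EuclideanSpace ℝ (Fin n)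

/-- Decreasing rearrangement of `f` with respect to `μ`. -/
def rearrangement {α : Type*} [MeasurableSpace α] (μ : Measure α)
    {E : Type*} [NNNorm E] (f : α → E) (t : ℝ) : ℝ≥0∞ :=
  sInf {l : ℝ≥0∞ | μ {x | l < (‖f x‖₊ : ℝ≥0∞)} ≤ ENNReal.ofReal t}

/-- Lorentz quasinorm `‖f‖_{L^{p,q}}` defined via the decreasing rearrangement. -/
def lorentzNorm {α : Type*} [MeasurableSpace α] {E : Type*} [NNNorm E]
    (μ : Measure α) (p q : ℝ≥0∞) (f : α → E) : ℝ≥0∞ :=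
  if q = ∞ then ⨆ t ∈ Ioi (0:ℝ), ENNReal.ofReal (t ^ p.toReal⁻¹) * rearrangement μ f t
  else (∫⁻ t in Ioi (0:ℝ),
      (ENNReal.ofReal (t ^ p.toReal⁻¹) * rearrangement μ f t) ^ q.toReal
        * ENNReal.ofReal t⁻¹) ^ q.toReal⁻¹

/-- `‖f‖_{L^{p,2}(ℝ^n)}`. -/
def lornorm (n : ℕ) (p : ℝ) (f : Rn n → ℂ) : ℝ≥0∞ :=
  lorentzNorm volume (ENNReal.ofReal p) 2 f

/-- The free Schrödinger propagator `e^{itΔ}` on `ℝ^n`, given by convolution with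
`(4πit)^{-n/2} e^{i|x|²/(4t)}`. -/
def schrodinger (n : ℕ) (t : ℝ) (f : Rn n → ℂ) : Rn n → ℂ := fun x =>
  (4 * (Real.pi : ℂ) * Complex.I * (t : ℂ)) ^ (-(n : ℂ) / 2) *
    ∫ y : Rn n, Complex.exp (Complex.I * ((‖x - y‖ : ℂ)) ^ 2 / (4 * (t : ℂ))) * f y

/-- The Strichartz exponent `γ(p)` with `1/γ(p) = (n/2)(1/2 - 1/p)` (so `γ(2) = ∞`). -/
def gam (n : ℕ) (p : ℝ) : ℝ≥0∞ := (ENNReal.ofReal ((n / 2 : ℝ) * (1/2 - 1/p)))⁻¹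

/-- Hölder conjugate of an extended-real exponent. -/
def conjE (p : ℝ≥0∞) : ℝ≥0∞ := (1 - p⁻¹)⁻¹

/-- Mixed space-time norm `‖f‖_{L^γ(I, X)}` given the map `t ↦ ‖f(t)‖_X`. -/
def timeNorm (γ : ℝ≥0∞) (I : Set ℝ) (N : ℝ → ℝ≥0∞) : ℝ≥0∞ :=
  if γ = ∞ then essSup N (volume.restrict I)
  else (∫⁻ t in I, N t ^ γ.toReal) ^ γ.toReal⁻¹

/-- `2 ≤ p < 2*` where `2* = 2n/(n-2)` for `n ≥ 3` and `2* = ∞` for `n = 1, 2`. -/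
def subcrit (n : ℕ) (p : ℝ) : Prop := 2 ≤ p ∧ (3 ≤ n → p < 2 * n / (n - 2))

/-- Duhamel operator `A_S f (t) = ∫_{t₀}^t e^{i(t-τ)Δ} f(τ) dτ`. -/
def duhamel (n : ℕ) (t₀ : ℝ) (f : ℝ → Rn n → ℂ) (t : ℝ) : Rn n → ℂ :=
  fun x => ∫ τ in t₀..t, schrodinger n (t - τ) (f τ) x

/-- The inhomogeneous nonlinearity `|x|^{-b} |u|^σ u`. -/
def nonlin (n : ℕ) (b σ : ℝ) (u : Rn n → ℂ) : Rn n → ℂ := fun x =>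
  Complex.ofReal (‖x‖ ^ (-b)) * (Complex.ofReal (‖u x‖ ^ σ) * u x)

/-- Laplacian on `ℝ^n` of a complex-valued function. -/
def lap (n : ℕ) (f : Rn n → ℂ) (x : Rn n) : ℂ :=
  ∑ i : Fin n, fderiv ℝ (fun y => fderiv ℝ f y (EuclideanSpace.single i 1)) x
    (EuclideanSpace.single i 1)

/-- `u` solves `i ∂_t u + Δ u = λ |x|^{-b} |u|^σ u` classically away from `x = 0`. -/
def solvesINLS (n : ℕ) (b σ : ℝ) (lam : ℂ) (u : ℝ → Rn n → ℂ) : Prop :=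
  ∀ t : ℝ, ∀ x : Rn n, x ≠ 0 →
    Complex.I * deriv (fun s => u s x) t + lap n (u t) x =
      lam * Complex.ofReal (‖x‖ ^ (-b)) * (Complex.ofReal (‖u t x‖ ^ σ) * u t x)

/-- Peetre K-functional for the couple `(L²(ℝ^n), L^r(ℝ^n))`. -/
def Kfun (n : ℕ) (r : ℝ) (t : ℝ) (f : Rn n → ℂ) : ℝ≥0∞ :=
  ⨅ g : Rn n → ℂ,
    eLpNorm g 2 volume + ENNReal.ofReal t * eLpNorm (f - g) (ENNReal.ofReal r) volume

/-- Real interpolation norm for `(L², L^r)_{θ,2}` by the K-method. -/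
def interpNorm (n : ℕ) (r θ : ℝ) (f : Rn n → ℂ) : ℝ≥0∞ :=
  (∫⁻ t in Ioi (0:ℝ), (ENNReal.ofReal (t ^ (-θ)) * Kfun n r t f) ^ (2:ℝ)
    * ENNReal.ofReal t⁻¹) ^ ((2:ℝ)⁻¹)

/-- `u` is a solution of the Duhamel equation for INLS with data `u₀` on the time set `I`,
belonging to `L^{γ(r)}(I, L^{r,2})`. -/
def IsSolOn (n : ℕ) (b σ r : ℝ) (lam : ℂ) (u₀ : Rn n → ℂ) (I : Set ℝ)
    (u : ℝ → Rn n → ℂ) : Prop :=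
  Measurable (fun q : ℝ × Rn n => u q.1 q.2) ∧
  timeNorm (gam n r) I (fun t => lornorm n r (u t)) < ∞ ∧
  ∀ t ∈ I, ∀ᵐ x : Rn n ∂volume, u t x = schrodinger n t u₀ x -
    Complex.I * lam * duhamel n 0 (fun τ => nonlin n b σ (u τ)) t x

end


section AuxLemmas

open Metric

variable {α : Type*} [MeasurableSpace α] {μ : Measure α}

lemma rearr_le_of_dist {f : α → ℂ} {t : ℝ} {a : ℝ≥0∞}
    (h : μ {x | a < (‖f x‖₊ : ℝ≥0∞)} ≤ ENNReal.ofReal t) :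
    rearrangement μ f t ≤ a := sInf_le h

lemma rearr_anti (f : α → ℂ) : Antitone (rearrangement μ f) := by
  intro s t hst
  exact sInf_le_sInf fun l hl => le_trans hl (ENNReal.ofReal_le_ofReal hst)

lemma rearr_mul_le {f g : α → ℂ} {t s : ℝ} {a : ℝ≥0∞} (ha0 : a ≠ 0) (hat : a ≠ ⊤)
    (ht : 0 ≤ t) (hs : 0 ≤ s)
    (ha : μ {x | a < (‖f x‖₊ : ℝ≥0∞)} ≤ ENNReal.ofReal t) :
    rearrangement μ (fun x => f x * g x) (t + s) ≤ a * rearrangement μ g s := by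
  have key : ∀ c ∈ {l : ℝ≥0∞ | μ {x | l < (‖g x‖₊ : ℝ≥0∞)} ≤ ENNReal.ofReal s},
      rearrangement μ (fun x => f x * g x) (t + s) ≤ a * c := by
    intro c hc
    apply rearr_le_of_dist
    have hsub : {x | a * c < (‖f x * g x‖₊ : ℝ≥0∞)} ⊆
        {x | a < (‖f x‖₊ : ℝ≥0∞)} ∪ {x | c < (‖g x‖₊ : ℝ≥0∞)} := by
      intro x hx
      rw [Set.mem_union]
      by_contra hcon
      push_neg at hcon
      simp only [Set.mem_setOf_eq, not_lt] at hcon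
      obtain ⟨h1, h2⟩ := hcon
      have hx' : a * c < (‖f x * g x‖₊ : ℝ≥0∞) := hx
      have heq : (‖f x * g x‖₊ : ℝ≥0∞) = (‖f x‖₊ : ℝ≥0∞) * (‖g x‖₊ : ℝ≥0∞) := by
        rw [nnnorm_mul, ENNReal.coe_mul]
      rw [heq] at hx'
      exact absurd (mul_le_mul' h1 h2) (not_le.mpr hx')
    calc μ {x | a * c < (‖f x * g x‖₊ : ℝ≥0∞)}
        ≤ μ ({x | a < (‖f x‖₊ : ℝ≥0∞)} ∪ {x | c < (‖g x‖₊ : ℝ≥0∞)}) := measure_mono hsub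
      _ ≤ μ {x | a < (‖f x‖₊ : ℝ≥0∞)} + μ {x | c < (‖g x‖₊ : ℝ≥0∞)} := measure_union_le _ _
      _ ≤ ENNReal.ofReal t + ENNReal.ofReal s := add_le_add ha hc
      _ = ENNReal.ofReal (t + s) := (ENNReal.ofReal_add ht hs).symm
  have h2 : a⁻¹ * rearrangement μ (fun x => f x * g x) (t + s) ≤ rearrangement μ g s := by
    apply le_sInf
    intro c hc
    have h3 := mul_le_mul_right (key c hc) a⁻¹
    rwa [← mul_assoc, ENNReal.inv_mul_cancel ha0 hat, one_mul] at h3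
  calc rearrangement μ (fun x => f x * g x) (t + s)
      = a * (a⁻¹ * rearrangement μ (fun x => f x * g x) (t + s)) := by
        rw [← mul_assoc, ENNReal.mul_inv_cancel ha0 hat, one_mul]
    _ ≤ a * rearrangement μ g s := mul_le_mul_right h2 a

lemma rearr_rpow_le {g u : α → ℂ} {p : ℝ} (hp : 0 < p)
    (hg : ∀ x, (‖g x‖₊ : ℝ≥0∞) = (‖u x‖₊ : ℝ≥0∞) ^ p) (t : ℝ) :
    rearrangement μ g t ≤ rearrangement μ u t ^ p := by
  have key : ∀ a ∈ {l : ℝ≥0∞ | μ {x | l < (‖u x‖₊ : ℝ≥0∞)} ≤ ENNReal.ofReal t},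
      rearrangement μ g t ≤ a ^ p := by
    intro a ha
    apply rearr_le_of_dist
    have : {x | a ^ p < (‖g x‖₊ : ℝ≥0∞)} = {x | a < (‖u x‖₊ : ℝ≥0∞)} := by
      ext x
      simp only [Set.mem_setOf_eq, hg x, ENNReal.rpow_lt_rpow_iff hp]
    rw [this]; exact ha
  have h2 : rearrangement μ g t ^ p⁻¹ ≤ rearrangement μ u t := by
    apply le_sInf
    intro a ha
    have h3 := ENNReal.rpow_le_rpow (key a ha) (le_of_lt (inv_pos.mpr hp))
    rwa [← ENNReal.rpow_mul, mul_inv_cancel₀ hp.ne', ENNReal.rpow_one] at h3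
  have h4 := ENNReal.rpow_le_rpow h2 hp.le
  rwa [← ENNReal.rpow_mul, inv_mul_cancel₀ hp.ne', ENNReal.rpow_one] at h4

lemma nnnorm_pow_aux {σ : ℝ} (hσ : 0 < σ) (z : ℂ) :
    (‖((‖z‖ ^ σ : ℝ) : ℂ) * z‖₊ : ℝ≥0∞) = (‖z‖₊ : ℝ≥0∞) ^ (σ + 1) := by
  rcases eq_or_ne z 0 with rfl | hz
  · rw [mul_zero, nnnorm_zero, ENNReal.coe_zero]
    exact (ENNReal.zero_rpow_of_pos (by linarith)).symm
  · rw [← enorm_eq_nnnorm, ← ofReal_norm_eq_enorm, ← enorm_eq_nnnorm, ← ofReal_norm_eq_enorm, norm_mul,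
      Complex.norm_real, Real.norm_eq_abs,
      abs_of_nonneg (Real.rpow_nonneg (norm_nonneg z) σ),
      ← Real.rpow_add_one (norm_ne_zero_iff.mpr hz) σ,
      ENNReal.ofReal_rpow_of_nonneg (norm_nonneg z) (by linarith)]

lemma lintegral_Ioi_double {H : ℝ → ℝ≥0∞} (hH : Measurable H) :
    ∫⁻ t in Ioi (0:ℝ), H t = 2 * ∫⁻ s in Ioi (0:ℝ), H (2 * s) := by
  have hphi : Measurable fun s : ℝ => 2 * s := measurable_id.const_mul 2
  have hpre : (fun s : ℝ => 2 * s) ⁻¹' Ioi 0 = Ioi 0 := by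
    ext s
    simp only [Set.mem_preimage, Set.mem_Ioi]
    constructor <;> intro h <;> linarith
  have h1 : ∫⁻ s in Ioi (0:ℝ), H (2 * s)
      = ∫⁻ t, H t ∂(Measure.map (fun s : ℝ => 2 * s) (volume.restrict (Ioi 0))) :=
    (lintegral_map hH hphi).symm
  have h2 : Measure.map (fun s : ℝ => 2 * s) (volume.restrict (Ioi 0))
      = ENNReal.ofReal |(2:ℝ)⁻¹| • volume.restrict (Ioi 0) := by
    conv_lhs => rw [show (Ioi (0:ℝ)) = (fun s : ℝ => 2 * s) ⁻¹' Ioi 0 from hpre.symm]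
    rw [← Measure.restrict_map hphi measurableSet_Ioi,
      Real.map_volume_mul_left (two_ne_zero), Measure.restrict_smul]
  rw [h1, h2, lintegral_smul_measure]
  have h3 : ENNReal.ofReal |(2:ℝ)⁻¹| = 2⁻¹ := by
    rw [abs_of_pos (by norm_num : (0:ℝ) < 2⁻¹), ENNReal.ofReal_inv_of_pos (by norm_num),
      ENNReal.ofReal_ofNat]
  rw [h3, smul_eq_mul, ← mul_assoc, ENNReal.mul_inv_cancel (by norm_num) ENNReal.ofNat_ne_top, one_mul]

lemma dist_rpow_neg (n : ℕ) (hn : 1 ≤ n) {b : ℝ} (hb : 0 < b) (hbn : b < n) {s Vn : ℝ}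
    (hVn : Vn = (volume (Metric.ball (0 : Rn n) 1)).toReal) (hs : 0 < s)
    [Nontrivial (Rn n)] :
    volume {x : Rn n | ENNReal.ofReal ((s / Vn) ^ (-(b / n))) <
      (‖(((‖x‖ ^ (-b) : ℝ)) : ℂ)‖₊ : ℝ≥0∞)} ≤ ENNReal.ofReal s := by
  have hVtop : volume (Metric.ball (0 : Rn n) 1) ≠ ⊤ := measure_ball_lt_top.ne
  have hV0 : volume (Metric.ball (0 : Rn n) 1) ≠ 0 := (Metric.measure_ball_pos _ _ one_pos).ne'
  have hVnpos : 0 < Vn := by rw [hVn]; exact ENNReal.toReal_pos hV0 hVtop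
  have hsV : 0 < s / Vn := div_pos hs hVnpos
  set R := (s / Vn) ^ ((n : ℝ)⁻¹) with hRdef
  have hR : 0 < R := Real.rpow_pos_of_pos hsV _
  have hnR : (0:ℝ) < n := lt_trans hb hbn
  have hsub : {x : Rn n | ENNReal.ofReal ((s / Vn) ^ (-(b / n))) <
      (‖(((‖x‖ ^ (-b) : ℝ)) : ℂ)‖₊ : ℝ≥0∞)} ⊆ Metric.ball (0 : Rn n) R := by
    intro x hx
    simp only [Set.mem_setOf_eq] at hx
    have hnn : (‖(((‖x‖ ^ (-b) : ℝ)) : ℂ)‖₊ : ℝ≥0∞) = ENNReal.ofReal (‖x‖ ^ (-b)) := by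
      rw [← enorm_eq_nnnorm, ← ofReal_norm_eq_enorm, Complex.norm_real, Real.norm_eq_abs,
        abs_of_nonneg (Real.rpow_nonneg (norm_nonneg x) _)]
    rw [hnn] at hx
    have hxpos : 0 < ‖x‖ ^ (-b) := by
      have := lt_of_le_of_lt zero_le hx
      exact ENNReal.ofReal_pos.mp this
    have hlt : (s / Vn) ^ (-(b / n)) < ‖x‖ ^ (-b) := (ENNReal.ofReal_lt_ofReal_iff hxpos).mp hx
    have hx0 : 0 < ‖x‖ := by
      rcases lt_or_eq_of_le (norm_nonneg x) with h | h
      · exact h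
      · exfalso
        rw [← h, Real.zero_rpow (by linarith : -b ≠ 0)] at hxpos
        exact lt_irrefl _ hxpos
    have hRb : R ^ (-b) = (s / Vn) ^ (-(b / n)) := by
      rw [hRdef, ← Real.rpow_mul hsV.le]
      congr 1
      field_simp
    rw [Metric.mem_ball, dist_zero_right]
    by_contra hcon
    push_neg at hcon
    have h5 : R ^ b ≤ ‖x‖ ^ b := Real.rpow_le_rpow hR.le hcon hb.le
    have h6 : (‖x‖ ^ b)⁻¹ ≤ (R ^ b)⁻¹ := inv_anti₀ (Real.rpow_pos_of_pos hR b) h5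
    rw [← Real.rpow_neg (norm_nonneg x), ← Real.rpow_neg hR.le] at h6
    rw [← hRb] at hlt
    exact absurd (lt_of_lt_of_le hlt h6) (lt_irrefl _)
  calc volume {x : Rn n | ENNReal.ofReal ((s / Vn) ^ (-(b / n))) <
        (‖(((‖x‖ ^ (-b) : ℝ)) : ℂ)‖₊ : ℝ≥0∞)}
      ≤ volume (Metric.ball (0 : Rn n) R) := measure_mono hsub
    _ = ENNReal.ofReal (R ^ Module.finrank ℝ (Rn n)) * volume (Metric.ball (0 : Rn n) 1) :=
        Measure.addHaar_ball volume 0 hR.le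
    _ = ENNReal.ofReal s := by
        rw [finrank_euclideanSpace_fin]
        have hRn : R ^ n = s / Vn := by
          rw [← Real.rpow_natCast R n, hRdef, ← Real.rpow_mul hsV.le,
            inv_mul_cancel₀ (by exact_mod_cast hnR.ne' : (n:ℝ) ≠ 0), Real.rpow_one]
        rw [hRn]
        have hball : volume (Metric.ball (0 : Rn n) 1) = ENNReal.ofReal Vn := by
          rw [hVn, ENNReal.ofReal_toReal hVtop]
        rw [hball, ← ENNReal.ofReal_mul hsV.le, div_mul_cancel₀ s hVnpos.ne']

end AuxLemmas

/-- nonlinearity estimate in Lorentz spaces: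
`1/r' = (σ+1)/r + b/n` and `‖|x|^{-b}|u|^σ u‖_{L^{r',2}} ≲ ‖u‖_{L^{r,2}}^{σ+1}`. -/
theorem nonlinearity_estimate (n : ℕ) (hn : 1 ≤ n) (b σ r : ℝ)
    (hb : 0 < b) (hb2 : b < 2) (hbn : b < n)
    (hσ : 0 < σ) (hσc : σ ≤ (4 - 2 * b) / n)
    (hr : r = n * (σ + 2) / (n - b)) :
    (1 - 1 / r = (σ + 1) / r + b / n) ∧
    ∃ C : ℝ≥0∞, C < ∞ ∧ ∀ u : Rn n → ℂ, Measurable u →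
      lornorm n (r / (r - 1)) (nonlin n b σ u) ≤ C * lornorm n r u ^ (σ + 1) := by
  classical
  have hn0 : (0:ℝ) < n := lt_trans hb hbn
  have hnb : (0:ℝ) < (n:ℝ) - b := by linarith
  have hnne : (n:ℝ) ≠ 0 := hn0.ne'
  have hnbne : (n:ℝ) - b ≠ 0 := hnb.ne'
  have hσ2 : σ + 2 ≠ 0 := by linarith
  have hr0 : 0 < r := by rw [hr]; positivity
  have hr1 : 1 < r := by
    rw [hr, lt_div_iff₀ hnb]; nlinarith
  have hrne : r ≠ 0 := hr0.ne'
  have part1 : 1 - 1 / r = (σ + 1) / r + b / n := by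
    rw [hr]; field_simp; ring
  refine ⟨part1, ?_⟩
  haveI : Nontrivial (Rn n) := ⟨⟨WithLp.toLp 2 (fun _ => 1 : Fin n → ℝ), 0, fun h => by
    have h2 := congrArg (fun v : Rn n => v ⟨0, by omega⟩) h
    simpa using h2⟩⟩
  set Vn : ℝ := (volume (Metric.ball (0 : Rn n) 1)).toReal with hVndef
  have hVn : 0 < Vn := by
    rw [hVndef]
    exact ENNReal.toReal_pos (Metric.measure_ball_pos _ _ one_pos).ne' measure_ball_lt_top.ne
  have hrinv : (0:ℝ) < r⁻¹ := by positivity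
  set cM : ℝ≥0∞ := (ENNReal.ofReal (2 ^ (2 / r) * 2)) ^ ((2:ℝ)⁻¹) with hcMdef
  have hcMtop : cM ≠ ⊤ := ENNReal.rpow_ne_top_of_nonneg (by norm_num) ENNReal.ofReal_ne_top
  have hcM0 : cM ≠ 0 :=
    (ENNReal.rpow_pos (ENNReal.ofReal_pos.mpr (by positivity)) ENNReal.ofReal_ne_top).ne'
  set c5 : ℝ := 2 ^ (1 - 1 / r) * Vn ^ (b / n) with hc5def
  have hc5pos : 0 < c5 := by rw [hc5def]; positivity
  set Cb : ℝ≥0∞ := 2 * (ENNReal.ofReal c5 ^ (2:ℝ) * (2⁻¹ * cM ^ (2 * σ))) with hCbdef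
  have hCbtop : Cb ≠ ⊤ := by
    rw [hCbdef]
    refine ENNReal.mul_ne_top ENNReal.ofNat_ne_top (ENNReal.mul_ne_top ?_ (ENNReal.mul_ne_top ?_ ?_))
    · exact ENNReal.rpow_ne_top_of_nonneg (by norm_num) ENNReal.ofReal_ne_top
    · simp
    · exact ENNReal.rpow_ne_top_of_nonneg (by positivity) hcMtop
  have hCb0 : Cb ≠ 0 := by
    rw [hCbdef]
    refine mul_ne_zero (by norm_num) (mul_ne_zero ?_ (mul_ne_zero (by norm_num) ?_))
    · exact (ENNReal.rpow_pos (ENNReal.ofReal_pos.mpr hc5pos) ENNReal.ofReal_ne_top).ne'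
    · exact (ENNReal.rpow_pos (lt_of_le_of_ne zero_le (Ne.symm hcM0)) hcMtop).ne'
  refine ⟨Cb ^ ((2:ℝ)⁻¹), ?_, ?_⟩
  · exact ENNReal.rpow_lt_top_of_nonneg (by norm_num) hCbtop
  intro u hu
  set A := rearrangement (volume : Measure (Rn n)) u with hAdef
  set L := lornorm n r u with hLdef
  have hCne0 : Cb ^ ((2:ℝ)⁻¹) ≠ 0 := by
    intro h
    rcases ENNReal.rpow_eq_zero_iff.mp h with ⟨h1, _⟩ | ⟨_, h2⟩
    · exact hCb0 h1
    · norm_num at h2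
  by_cases hLtop : L = ⊤
  · rw [hLtop, ENNReal.top_rpow_of_pos (by linarith : (0:ℝ) < σ + 1),
      ENNReal.mul_top hCne0]
    exact le_top
  -- expressing L
  have hL2 : L ^ (2:ℝ) = ∫⁻ s in Ioi (0:ℝ),
      (ENNReal.ofReal (s ^ r⁻¹) * A s) ^ (2:ℝ) * ENNReal.ofReal s⁻¹ := by
    rw [hLdef]
    unfold lornorm lorentzNorm
    rw [if_neg ENNReal.ofNat_ne_top, ENNReal.toReal_ofNat, ENNReal.toReal_ofReal hr0.le,
      ← ENNReal.rpow_mul, show (2:ℝ)⁻¹ * 2 = 1 by norm_num, ENNReal.rpow_one]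
  have hAmeas : Measurable A := (rearr_anti u).measurable
  have hImeas : Measurable fun s : ℝ =>
      (ENNReal.ofReal (s ^ r⁻¹) * A s) ^ (2:ℝ) * ENNReal.ofReal s⁻¹ := by
    refine Measurable.mul ?_ (ENNReal.measurable_ofReal.comp measurable_inv)
    exact ((ENNReal.measurable_ofReal.comp (measurable_id.pow_const r⁻¹)).mul hAmeas).pow_const _
  -- rpow-squaring helper
  have hexp : ∀ c : ℝ, 0 ≤ c → ∀ x : ℝ≥0∞, (ENNReal.ofReal (c ^ r⁻¹) * x) ^ (2:ℝ) =
      ENNReal.ofReal (c ^ (2 / r)) * x ^ (2:ℝ) := by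
    intro c hc x
    rw [ENNReal.mul_rpow_of_nonneg _ _ (by norm_num : (0:ℝ) ≤ 2),
      ENNReal.ofReal_rpow_of_nonneg (Real.rpow_nonneg hc _) (by norm_num),
      ← Real.rpow_mul hc, show r⁻¹ * 2 = 2 / r by ring]
  -- Step 1: sup bound
  have hM : ∀ t ∈ Ioi (0:ℝ), ENNReal.ofReal (t ^ r⁻¹) * A t ≤ cM * L := by
    intro t ht
    rw [Set.mem_Ioi] at ht
    have hsub1 : Ioc (t / 2) t ⊆ Ioi (0:ℝ) := fun s hs => lt_trans (by linarith) hs.1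
    have hIbound : (ENNReal.ofReal ((t / 2) ^ r⁻¹) * A t) ^ (2:ℝ) * ENNReal.ofReal t⁻¹ *
        ENNReal.ofReal (t / 2) ≤ L ^ (2:ℝ) := by
      rw [hL2]
      calc (ENNReal.ofReal ((t / 2) ^ r⁻¹) * A t) ^ (2:ℝ) * ENNReal.ofReal t⁻¹ *
            ENNReal.ofReal (t / 2)
          = ∫⁻ _ in Ioc (t / 2) t,
              (ENNReal.ofReal ((t / 2) ^ r⁻¹) * A t) ^ (2:ℝ) * ENNReal.ofReal t⁻¹ := by
            rw [setLIntegral_const, Real.volume_Ioc, show t - t / 2 = t / 2 by ring]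
        _ ≤ ∫⁻ s in Ioc (t / 2) t,
              (ENNReal.ofReal (s ^ r⁻¹) * A s) ^ (2:ℝ) * ENNReal.ofReal s⁻¹ := by
            refine setLIntegral_mono hImeas ?_
            intro s hs
            have hs0 : 0 < s := lt_trans (by linarith) hs.1
            refine mul_le_mul' (ENNReal.rpow_le_rpow (mul_le_mul' ?_ ?_) (by norm_num)) ?_
            · exact ENNReal.ofReal_le_ofReal
                (Real.rpow_le_rpow (by positivity) hs.1.le hrinv.le)
            · exact rearr_anti u hs.2
            · exact ENNReal.ofReal_le_ofReal (inv_anti₀ hs0 hs.2)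
        _ ≤ ∫⁻ s in Ioi (0:ℝ),
              (ENNReal.ofReal (s ^ r⁻¹) * A s) ^ (2:ℝ) * ENNReal.ofReal s⁻¹ :=
            lintegral_mono_set hsub1
    have h2rpos : (0:ℝ) < 2 ^ (2 / r) := by positivity
    have hofreal : ENNReal.ofReal ((t / 2) ^ (2 / r)) *
        (ENNReal.ofReal t⁻¹ * (ENNReal.ofReal (t / 2) * ENNReal.ofReal (2 ^ (2 / r) * 2)))
        = ENNReal.ofReal (t ^ (2 / r)) := by
      rw [← ENNReal.ofReal_mul (by positivity : (0:ℝ) ≤ t / 2),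
        ← ENNReal.ofReal_mul (by positivity : (0:ℝ) ≤ t⁻¹),
        ← ENNReal.ofReal_mul (by positivity : (0:ℝ) ≤ (t / 2) ^ (2 / r))]
      congr 1
      rw [Real.div_rpow ht.le (by norm_num : (0:ℝ) ≤ 2)]
      field_simp
    have key2 : (ENNReal.ofReal (t ^ r⁻¹) * A t) ^ (2:ℝ)
        ≤ ENNReal.ofReal (2 ^ (2 / r) * 2) * L ^ (2:ℝ) := by
      rw [hexp t ht.le (A t)]
      have h6 := mul_le_mul_left hIbound (ENNReal.ofReal (2 ^ (2 / r) * 2))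
      rw [hexp (t / 2) (by positivity) (A t)] at h6
      calc ENNReal.ofReal (t ^ (2 / r)) * A t ^ (2:ℝ)
          = ENNReal.ofReal ((t / 2) ^ (2 / r)) * A t ^ (2:ℝ) * ENNReal.ofReal t⁻¹ *
              ENNReal.ofReal (t / 2) * ENNReal.ofReal (2 ^ (2 / r) * 2) := by
            rw [← hofreal]; ring
        _ ≤ L ^ (2:ℝ) * ENNReal.ofReal (2 ^ (2 / r) * 2) := h6
        _ = ENNReal.ofReal (2 ^ (2 / r) * 2) * L ^ (2:ℝ) := mul_comm _ _
    have h7 := ENNReal.rpow_le_rpow key2 (by norm_num : (0:ℝ) ≤ 2⁻¹)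
    rw [← ENNReal.rpow_mul, show (2:ℝ) * 2⁻¹ = 1 by norm_num, ENNReal.rpow_one,
      ENNReal.mul_rpow_of_nonneg _ _ (by norm_num : (0:ℝ) ≤ 2⁻¹),
      ← ENNReal.rpow_mul L, show (2:ℝ) * 2⁻¹ = 1 by norm_num, ENNReal.rpow_one] at h7
    exact h7
  -- the nonlinearity side
  set W := rearrangement (volume : Measure (Rn n)) (nonlin n b σ u) with hWdef
  have hWmeas : Measurable W := (rearr_anti _).measurable
  have hp'pos : 0 < r / (r - 1) := div_pos hr0 (by linarith)
  have hp'inv : (r / (r - 1))⁻¹ = 1 - 1 / r := by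
    rw [inv_div, sub_div, div_self hrne, one_div]
  have hJ : lornorm n (r / (r - 1)) (nonlin n b σ u) = (∫⁻ t in Ioi (0:ℝ),
      (ENNReal.ofReal (t ^ (1 - 1 / r)) * W t) ^ (2:ℝ) * ENNReal.ofReal t⁻¹) ^ ((2:ℝ)⁻¹) := by
    unfold lornorm lorentzNorm
    rw [if_neg ENNReal.ofNat_ne_top, ENNReal.toReal_ofNat, ENNReal.toReal_ofReal hp'pos.le,
      hp'inv, hWdef]
  have hHmeas : Measurable fun t : ℝ =>
      (ENNReal.ofReal (t ^ (1 - 1 / r)) * W t) ^ (2:ℝ) * ENNReal.ofReal t⁻¹ := by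
    refine Measurable.mul ?_ (ENNReal.measurable_ofReal.comp measurable_inv)
    exact ((ENNReal.measurable_ofReal.comp (measurable_id.pow_const _)).mul hWmeas).pow_const _
  have hCoV : ∫⁻ t in Ioi (0:ℝ),
      (ENNReal.ofReal (t ^ (1 - 1 / r)) * W t) ^ (2:ℝ) * ENNReal.ofReal t⁻¹
      = 2 * ∫⁻ s in Ioi (0:ℝ),
      (ENNReal.ofReal ((2 * s) ^ (1 - 1 / r)) * W (2 * s)) ^ (2:ℝ) *
        ENNReal.ofReal (2 * s)⁻¹ :=
    lintegral_Ioi_double hHmeas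
  set D : ℝ≥0∞ := ENNReal.ofReal c5 ^ (2:ℝ) * (2⁻¹ * (cM * L) ^ (2 * σ)) with hDdef
  have hDtop : D ≠ ⊤ := by
    rw [hDdef]
    refine ENNReal.mul_ne_top ?_ (ENNReal.mul_ne_top (by simp) ?_)
    · exact ENNReal.rpow_ne_top_of_nonneg (by norm_num) ENNReal.ofReal_ne_top
    · exact ENNReal.rpow_ne_top_of_nonneg (by positivity)
        (ENNReal.mul_ne_top hcMtop hLtop)
  -- pointwise bound
  have hptJ : ∀ s ∈ Ioi (0:ℝ),
      (ENNReal.ofReal ((2 * s) ^ (1 - 1 / r)) * W (2 * s)) ^ (2:ℝ) *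
        ENNReal.ofReal (2 * s)⁻¹
      ≤ D * ((ENNReal.ofReal (s ^ r⁻¹) * A s) ^ (2:ℝ) * ENNReal.ofReal s⁻¹) := by
    intro s hs'
    have hs : 0 < s := hs'
    have hW2s : W (2 * s) ≤ ENNReal.ofReal ((s / Vn) ^ (-(b / n))) * A s ^ (σ + 1) := by
      rw [hWdef, show 2 * s = s + s by ring,
        show nonlin n b σ u = fun x =>
          (((‖x‖ ^ (-b) : ℝ)) : ℂ) * ((((‖u x‖ ^ σ : ℝ)) : ℂ) * u x) from rfl]
      calc rearrangement volume (fun x =>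
            (((‖x‖ ^ (-b) : ℝ)) : ℂ) * ((((‖u x‖ ^ σ : ℝ)) : ℂ) * u x)) (s + s)
          ≤ ENNReal.ofReal ((s / Vn) ^ (-(b / n))) *
              rearrangement volume (fun x => (((‖u x‖ ^ σ : ℝ)) : ℂ) * u x) s :=
            rearr_mul_le (ENNReal.ofReal_pos.mpr (by positivity)).ne' ENNReal.ofReal_ne_top
              hs.le hs.le (dist_rpow_neg n hn hb hbn hVndef hs)
        _ ≤ ENNReal.ofReal ((s / Vn) ^ (-(b / n))) * A s ^ (σ + 1) := by
            refine mul_le_mul_right ?_ _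
            rw [hAdef]
            exact rearr_rpow_le (by linarith : (0:ℝ) < σ + 1)
              (fun x => nnnorm_pow_aux hσ (u x)) s
    have e2 : ENNReal.ofReal ((2 * s) ^ (1 - 1 / r)) * ENNReal.ofReal ((s / Vn) ^ (-(b / n)))
        = ENNReal.ofReal (c5 * s ^ ((σ + 1) / r)) := by
      rw [← ENNReal.ofReal_mul (by positivity)]
      congr 1
      have hs2 : s ^ (1 - 1 / r) * s ^ (-(b / (n:ℝ))) = s ^ ((σ + 1) / r) := by
        rw [← Real.rpow_add hs]
        congr 1
        linarith [part1]
      rw [Real.mul_rpow (by norm_num : (0:ℝ) ≤ 2) hs.le, Real.div_rpow hs.le hVn.le,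
        Real.rpow_neg hVn.le, hc5def, ← hs2]
      have hVne : Vn ^ (b / (n:ℝ)) ≠ 0 := by positivity
      field_simp
    have e3 : ENNReal.ofReal ((2 * s)⁻¹) = 2⁻¹ * ENNReal.ofReal s⁻¹ := by
      rw [mul_inv, ENNReal.ofReal_mul (by norm_num : (0:ℝ) ≤ 2⁻¹),
        ENNReal.ofReal_inv_of_pos (by norm_num : (0:ℝ) < 2), ENNReal.ofReal_ofNat]
    have e4 : ENNReal.ofReal (c5 * s ^ ((σ + 1) / r)) * A s ^ (σ + 1)
        = ENNReal.ofReal c5 * (ENNReal.ofReal (s ^ r⁻¹) * A s) ^ (σ + 1) := by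
      rw [ENNReal.ofReal_mul hc5pos.le, mul_assoc]
      congr 1
      rw [ENNReal.mul_rpow_of_nonneg _ _ (by linarith : (0:ℝ) ≤ σ + 1),
        ENNReal.ofReal_rpow_of_nonneg (Real.rpow_nonneg hs.le _) (by linarith)]
      congr 2
      rw [← Real.rpow_mul hs.le]
      congr 1
      ring
    calc (ENNReal.ofReal ((2 * s) ^ (1 - 1 / r)) * W (2 * s)) ^ (2:ℝ) *
          ENNReal.ofReal (2 * s)⁻¹
        ≤ (ENNReal.ofReal ((2 * s) ^ (1 - 1 / r)) *
            (ENNReal.ofReal ((s / Vn) ^ (-(b / n))) * A s ^ (σ + 1))) ^ (2:ℝ) *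
          ENNReal.ofReal (2 * s)⁻¹ :=
          mul_le_mul_left (ENNReal.rpow_le_rpow (mul_le_mul_right hW2s _) (by norm_num)) _
      _ = (ENNReal.ofReal c5 * (ENNReal.ofReal (s ^ r⁻¹) * A s) ^ (σ + 1)) ^ (2:ℝ) *
          (2⁻¹ * ENNReal.ofReal s⁻¹) := by
          rw [← mul_assoc, e2, e3, e4]
      _ = (ENNReal.ofReal (s ^ r⁻¹) * A s) ^ (2 * σ) *
          (ENNReal.ofReal c5 ^ (2:ℝ) *
            ((ENNReal.ofReal (s ^ r⁻¹) * A s) ^ (2:ℝ) * (2⁻¹ * ENNReal.ofReal s⁻¹))) := by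
          rw [ENNReal.mul_rpow_of_nonneg _ _ (by norm_num : (0:ℝ) ≤ 2),
            ← ENNReal.rpow_mul, show (σ + 1) * (2:ℝ) = 2 * σ + 2 by ring,
            ENNReal.rpow_add_of_nonneg (2 * σ) (2:ℝ) (by positivity) (by norm_num)]
          ring
      _ ≤ (cM * L) ^ (2 * σ) *
          (ENNReal.ofReal c5 ^ (2:ℝ) *
            ((ENNReal.ofReal (s ^ r⁻¹) * A s) ^ (2:ℝ) * (2⁻¹ * ENNReal.ofReal s⁻¹))) :=
          mul_le_mul_left (ENNReal.rpow_le_rpow (hM s hs') (by positivity)) _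
      _ = D * ((ENNReal.ofReal (s ^ r⁻¹) * A s) ^ (2:ℝ) * ENNReal.ofReal s⁻¹) := by
          rw [hDdef]; ring
  -- integrate
  have hJle : lornorm n (r / (r - 1)) (nonlin n b σ u) ≤ (2 * (D * L ^ (2:ℝ))) ^ ((2:ℝ)⁻¹) := by
    rw [hJ, hCoV]
    refine ENNReal.rpow_le_rpow ?_ (by norm_num)
    refine mul_le_mul_right ?_ 2
    calc ∫⁻ s in Ioi (0:ℝ), (ENNReal.ofReal ((2 * s) ^ (1 - 1 / r)) * W (2 * s)) ^ (2:ℝ) *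
          ENNReal.ofReal (2 * s)⁻¹
        ≤ ∫⁻ s in Ioi (0:ℝ),
            D * ((ENNReal.ofReal (s ^ r⁻¹) * A s) ^ (2:ℝ) * ENNReal.ofReal s⁻¹) :=
          setLIntegral_mono (hImeas.const_mul D) hptJ
      _ = D * ∫⁻ s in Ioi (0:ℝ),
            (ENNReal.ofReal (s ^ r⁻¹) * A s) ^ (2:ℝ) * ENNReal.ofReal s⁻¹ :=
          lintegral_const_mul' D _ hDtop
      _ = D * L ^ (2:ℝ) := by rw [← hL2]
  refine le_trans hJle (le_of_eq ?_)
  have hfinal : 2 * (D * L ^ (2:ℝ)) = Cb * L ^ (2 * σ + 2) := by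
    rw [hDdef, hCbdef, ENNReal.mul_rpow_of_nonneg cM L (by positivity : (0:ℝ) ≤ 2 * σ),
      ENNReal.rpow_add_of_nonneg (2 * σ) (2:ℝ) (by positivity) (by norm_num)]
    ring
  rw [hfinal, ENNReal.mul_rpow_of_nonneg _ _ (by norm_num : (0:ℝ) ≤ 2⁻¹),
    ← ENNReal.rpow_mul L, show (2 * σ + 2) * (2:ℝ)⁻¹ = σ + 1 by ring]
end

section
/- Lipschitz estimate for the inhomogeneous nonlinearity: let n ∈ ℕ, 0 < b < min{2, n}, σ > 0 and r = n(σ+2)/(n−b). Then ‖|x|^{-b}(|u|^σ u − |v|^σ v)‖_{L^{r',2}} ≲ (‖u‖_{L^{r,2}}^σ + ‖v‖_{L^{r,2}}^σ) ‖u − v‖_{L^{r,2}} for all u, v ∈ L^{r,2}(ℝ^n). -/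
open MeasureTheory ENNReal Set Filter

namespace NLaux
open MeasureTheory ENNReal Set

noncomputable section
variable {α : Type*} [MeasurableSpace α] (μ : Measure α)

def rr (φ : α → ℝ≥0∞) (t : ℝ) : ℝ≥0∞ :=
  sInf {l : ℝ≥0∞ | μ {x | l < φ x} ≤ ENNReal.ofReal t}

lemma rr_nonempty (φ : α → ℝ≥0∞) (t : ℝ) :
    {l : ℝ≥0∞ | μ {x | l < φ x} ≤ ENNReal.ofReal t}.Nonempty := by
  refine ⟨∞, ?_⟩
  simp [Set.mem_setOf_eq]

lemma rr_mem (φ : α → ℝ≥0∞) (t : ℝ) : μ {x | rr μ φ t < φ x} ≤ ENNReal.ofReal t := by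
  obtain ⟨u, hu_anti, hu_tend, hu_mem⟩ := exists_seq_tendsto_sInf (rr_nonempty μ φ t)
    (OrderBot.bddBelow _)
  have hset : {x | rr μ φ t < φ x} = ⋃ k, {x | u k < φ x} := by
    ext x
    simp only [Set.mem_setOf_eq, Set.mem_iUnion]
    constructor
    · intro hx
      rcases (hu_tend.eventually_lt_const hx).exists with ⟨k, hk⟩
      exact ⟨k, hk⟩
    · rintro ⟨k, hk⟩
      exact lt_of_le_of_lt (sInf_le (hu_mem k)) hk
  rw [hset]
  have hmono : Monotone fun k => {x | u k < φ x} := by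
    intro i j hij x hx
    exact lt_of_le_of_lt (hu_anti hij) hx
  rw [hmono.measure_iUnion]
  exact iSup_le fun k => hu_mem k

lemma rr_le_of_mem {φ : α → ℝ≥0∞} {t : ℝ} {l : ℝ≥0∞}
    (h : μ {x | l < φ x} ≤ ENNReal.ofReal t) : rr μ φ t ≤ l := sInf_le h

lemma rr_anti (φ : α → ℝ≥0∞) {s t : ℝ} (hst : s ≤ t) : rr μ φ t ≤ rr μ φ s :=
  sInf_le_sInf fun _ hl => le_trans hl (ENNReal.ofReal_le_ofReal hst)

lemma rr_mul {φ ψ χ : α → ℝ≥0∞} (h : ∀ x, φ x ≤ ψ x * χ x) {s t : ℝ}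
    (hs : 0 ≤ s) (ht : 0 ≤ t) :
    rr μ φ (s + t) ≤ rr μ ψ s * rr μ χ t := by
  refine rr_le_of_mem μ ?_
  have hsub : {x | rr μ ψ s * rr μ χ t < φ x} ⊆
      {x | rr μ ψ s < ψ x} ∪ {x | rr μ χ t < χ x} := by
    intro x hx
    by_contra hc
    simp only [Set.mem_union, Set.mem_setOf_eq, not_or, not_lt] at hc
    simp only [Set.mem_setOf_eq] at hx
    exact absurd (le_trans (h x) (mul_le_mul' hc.1 hc.2)) (not_le.mpr hx)
  calc μ {x | rr μ ψ s * rr μ χ t < φ x} ≤ μ {x | rr μ ψ s < ψ x} + μ {x | rr μ χ t < χ x} :=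
        le_trans (measure_mono hsub) (measure_union_le _ _)
    _ ≤ ENNReal.ofReal s + ENNReal.ofReal t := add_le_add (rr_mem μ ψ s) (rr_mem μ χ t)
    _ = ENNReal.ofReal (s + t) := (ENNReal.ofReal_add hs ht).symm

lemma rr_add {φ ψ χ : α → ℝ≥0∞} (h : ∀ x, φ x ≤ ψ x + χ x) {s t : ℝ}
    (hs : 0 ≤ s) (ht : 0 ≤ t) :
    rr μ φ (s + t) ≤ rr μ ψ s + rr μ χ t := by
  refine rr_le_of_mem μ ?_
  have hsub : {x | rr μ ψ s + rr μ χ t < φ x} ⊆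
      {x | rr μ ψ s < ψ x} ∪ {x | rr μ χ t < χ x} := by
    intro x hx
    by_contra hc
    simp only [Set.mem_union, Set.mem_setOf_eq, not_or, not_lt] at hc
    simp only [Set.mem_setOf_eq] at hx
    exact absurd (le_trans (h x) (add_le_add hc.1 hc.2)) (not_le.mpr hx)
  calc μ {x | rr μ ψ s + rr μ χ t < φ x} ≤ μ {x | rr μ ψ s < ψ x} + μ {x | rr μ χ t < χ x} :=
        le_trans (measure_mono hsub) (measure_union_le _ _)
    _ ≤ ENNReal.ofReal s + ENNReal.ofReal t := add_le_add (rr_mem μ ψ s) (rr_mem μ χ t)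
    _ = ENNReal.ofReal (s + t) := (ENNReal.ofReal_add hs ht).symm

lemma rr_const_mul {φ : α → ℝ≥0∞} {c : ℝ≥0∞} (hc0 : c ≠ 0) (hc : c ≠ ∞) (t : ℝ) :
    rr μ (fun x => c * φ x) t ≤ c * rr μ φ t := by
  refine rr_le_of_mem μ ?_
  have : {x | c * rr μ φ t < c * φ x} = {x | rr μ φ t < φ x} := by
    ext x
    simp only [Set.mem_setOf_eq]
    exact ⟨fun h => lt_of_not_ge fun h' => (not_le.mpr h) (mul_le_mul_right h' c), fun h => by rw [mul_comm c, mul_comm c]; exact ENNReal.mul_lt_mul_left hc0 hc h⟩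
  rw [this]
  exact rr_mem μ φ t

lemma rr_rpow {φ : α → ℝ≥0∞} {σ : ℝ} (hσ : 0 ≤ σ) (t : ℝ) :
    rr μ (fun x => φ x ^ σ) t ≤ (rr μ φ t) ^ σ := by
  refine rr_le_of_mem μ ?_
  refine le_trans (measure_mono ?_) (rr_mem μ φ t)
  intro x hx
  by_contra hc
  simp only [Set.mem_setOf_eq, not_lt] at hc hx
  exact absurd (ENNReal.rpow_le_rpow hc hσ) (not_le.mpr hx)

lemma rr_antitone_fun (φ : α → ℝ≥0∞) : Antitone (rr μ φ) := fun _ _ hst => rr_anti μ φ hst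
lemma weak_bound (φ : α → ℝ≥0∞) {p t : ℝ} (hp : 0 < p) (ht : 0 < t) :
    ENNReal.ofReal (t ^ p⁻¹) * rr μ φ t ≤ ENNReal.ofReal ((2:ℝ) ^ (p⁻¹ + 2⁻¹)) *
      (∫⁻ s in Ioi (0:ℝ), (ENNReal.ofReal (s ^ p⁻¹) * rr μ φ s) ^ (2:ℝ)
        * ENNReal.ofReal s⁻¹) ^ ((2:ℝ)⁻¹) := by
  set N2 := ∫⁻ s in Ioi (0:ℝ), (ENNReal.ofReal (s ^ p⁻¹) * rr μ φ s) ^ (2:ℝ)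
        * ENNReal.ofReal s⁻¹ with hN2
  have ht2 : (0:ℝ) < t / 2 := by linarith
  have key : (ENNReal.ofReal ((t/2) ^ p⁻¹) * rr μ φ t) ^ (2:ℝ)
      * ENNReal.ofReal t⁻¹ * ENNReal.ofReal (t/2) ≤ N2 := by
    have h1 : (ENNReal.ofReal ((t/2) ^ p⁻¹) * rr μ φ t) ^ (2:ℝ) * ENNReal.ofReal t⁻¹
        * volume (Ioc (t/2) t) ≤ N2 := by
      rw [hN2]
      calc (ENNReal.ofReal ((t/2) ^ p⁻¹) * rr μ φ t) ^ (2:ℝ) * ENNReal.ofReal t⁻¹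
            * volume (Ioc (t/2) t)
          = ∫⁻ _ in Ioc (t/2) t, (ENNReal.ofReal ((t/2) ^ p⁻¹) * rr μ φ t) ^ (2:ℝ)
            * ENNReal.ofReal t⁻¹ := by rw [setLIntegral_const]
        _ ≤ ∫⁻ s in Ioc (t/2) t, (ENNReal.ofReal (s ^ p⁻¹) * rr μ φ s) ^ (2:ℝ)
            * ENNReal.ofReal s⁻¹ := by
            refine setLIntegral_mono' measurableSet_Ioc fun s hs => ?_
            have hs1 : t/2 ≤ s := le_of_lt hs.1
            have hs0 : (0:ℝ) < s := lt_of_lt_of_le ht2 hs1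
            have e1 : ENNReal.ofReal ((t/2) ^ p⁻¹) ≤ ENNReal.ofReal (s ^ p⁻¹) :=
              ENNReal.ofReal_le_ofReal
                (Real.rpow_le_rpow ht2.le hs1 (inv_nonneg.mpr hp.le))
            have e2 : rr μ φ t ≤ rr μ φ s := rr_anti μ φ hs.2
            have e3 : ENNReal.ofReal t⁻¹ ≤ ENNReal.ofReal s⁻¹ :=
              ENNReal.ofReal_le_ofReal (by
                exact inv_anti₀ hs0 hs.2)
            exact mul_le_mul (ENNReal.rpow_le_rpow (mul_le_mul' e1 e2) (by norm_num)) e3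
              zero_le zero_le
        _ ≤ ∫⁻ s in Ioi (0:ℝ), (ENNReal.ofReal (s ^ p⁻¹) * rr μ φ s) ^ (2:ℝ)
            * ENNReal.ofReal s⁻¹ :=
            lintegral_mono_set (fun s hs => lt_trans ht2 hs.1 : Ioc (t/2) t ⊆ Ioi (0:ℝ))
    have hvol : volume (Ioc (t/2) t) = ENNReal.ofReal (t/2) := by
      rw [Real.volume_Ioc]
      congr 1
      ring
    rw [← hvol]
    exact h1
  -- now conclude
  have hX2 : (ENNReal.ofReal (t ^ p⁻¹) * rr μ φ t) ^ (2:ℝ) ≤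
      ENNReal.ofReal ((2:ℝ) ^ (p⁻¹ + 2⁻¹)) ^ (2:ℝ) *
      ((ENNReal.ofReal ((t/2) ^ p⁻¹) * rr μ φ t) ^ (2:ℝ)
        * ENNReal.ofReal t⁻¹ * ENNReal.ofReal (t/2)) := by
    have e1 : ENNReal.ofReal ((2:ℝ) ^ (p⁻¹ + 2⁻¹)) ^ (2:ℝ)
        = ENNReal.ofReal (((2:ℝ) ^ (p⁻¹ + 2⁻¹)) ^ (2:ℝ)) :=
      ENNReal.ofReal_rpow_of_nonneg (by positivity) (by norm_num)
    have e2 : ENNReal.ofReal ((t/2) ^ p⁻¹) ^ (2:ℝ)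
        = ENNReal.ofReal (((t/2) ^ p⁻¹) ^ (2:ℝ)) :=
      ENNReal.ofReal_rpow_of_nonneg (by positivity) (by norm_num)
    have e3 : ENNReal.ofReal (t ^ p⁻¹) ^ (2:ℝ)
        = ENNReal.ofReal ((t ^ p⁻¹) ^ (2:ℝ)) :=
      ENNReal.ofReal_rpow_of_nonneg (by positivity) (by norm_num)
    have hreal : ((2:ℝ) ^ (p⁻¹ + 2⁻¹)) ^ (2:ℝ) * (((t/2) ^ p⁻¹) ^ (2:ℝ) * t⁻¹ * (t/2))
        = (t ^ p⁻¹) ^ (2:ℝ) := by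
      rw [← Real.rpow_mul (by norm_num : (0:ℝ) ≤ 2), ← Real.rpow_mul ht2.le,
        ← Real.rpow_mul ht.le]
      have hexp : (p⁻¹ + 2⁻¹) * 2 = p⁻¹ * 2 + 1 := by ring
      rw [hexp, Real.rpow_add (by norm_num : (0:ℝ) < 2), Real.rpow_one]
      have hm : (2:ℝ) ^ (p⁻¹ * 2) * (t/2) ^ (p⁻¹ * 2) = t ^ (p⁻¹ * 2) := by
        rw [← Real.mul_rpow (by norm_num) ht2.le]
        congr 1
        ring
      have h5 : t⁻¹ * (t / 2) = 2⁻¹ := by field_simp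
      linear_combination hm + (2 * (2:ℝ) ^ (p⁻¹*2) * (t/2) ^ (p⁻¹*2)) * h5
    have hconsts : ENNReal.ofReal ((2:ℝ) ^ (p⁻¹ + 2⁻¹)) ^ (2:ℝ) *
        (ENNReal.ofReal ((t/2) ^ p⁻¹) ^ (2:ℝ) * ENNReal.ofReal t⁻¹ * ENNReal.ofReal (t/2))
        = ENNReal.ofReal (t ^ p⁻¹) ^ (2:ℝ) := by
      rw [e1, e2, e3, ← ENNReal.ofReal_mul (by positivity), ← ENNReal.ofReal_mul (by positivity),
        ← ENNReal.ofReal_mul (by positivity), hreal]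
    refine le_of_eq ?_
    calc (ENNReal.ofReal (t ^ p⁻¹) * rr μ φ t) ^ (2:ℝ)
        = ENNReal.ofReal (t ^ p⁻¹) ^ (2:ℝ) * rr μ φ t ^ (2:ℝ) :=
          ENNReal.mul_rpow_of_nonneg _ _ (by norm_num)
      _ = ENNReal.ofReal ((2:ℝ) ^ (p⁻¹ + 2⁻¹)) ^ (2:ℝ) *
          (ENNReal.ofReal ((t/2) ^ p⁻¹) ^ (2:ℝ) * ENNReal.ofReal t⁻¹ * ENNReal.ofReal (t/2))
          * rr μ φ t ^ (2:ℝ) := by rw [hconsts]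
      _ = ENNReal.ofReal ((2:ℝ) ^ (p⁻¹ + 2⁻¹)) ^ (2:ℝ) *
          ((ENNReal.ofReal ((t/2) ^ p⁻¹) * rr μ φ t) ^ (2:ℝ)
            * ENNReal.ofReal t⁻¹ * ENNReal.ofReal (t/2)) := by
          rw [ENNReal.mul_rpow_of_nonneg _ _ (by norm_num : (0:ℝ) ≤ 2)]
          ring
  have step : (ENNReal.ofReal (t ^ p⁻¹) * rr μ φ t) ^ (2:ℝ) ≤
      ENNReal.ofReal ((2:ℝ) ^ (p⁻¹ + 2⁻¹)) ^ (2:ℝ) * N2 :=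
    le_trans hX2 (mul_le_mul_right key _)
  have h12 : ((2:ℝ))⁻¹ ≥ 0 := by norm_num
  calc ENNReal.ofReal (t ^ p⁻¹) * rr μ φ t
      = ((ENNReal.ofReal (t ^ p⁻¹) * rr μ φ t) ^ (2:ℝ)) ^ ((2:ℝ)⁻¹) := by
        rw [← ENNReal.rpow_mul, mul_inv_cancel₀ (by norm_num : (2:ℝ) ≠ 0), ENNReal.rpow_one]
    _ ≤ (ENNReal.ofReal ((2:ℝ) ^ (p⁻¹ + 2⁻¹)) ^ (2:ℝ) * N2) ^ ((2:ℝ)⁻¹) :=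
        ENNReal.rpow_le_rpow step h12
    _ = ENNReal.ofReal ((2:ℝ) ^ (p⁻¹ + 2⁻¹)) * N2 ^ ((2:ℝ)⁻¹) := by
        rw [ENNReal.mul_rpow_of_nonneg _ _ h12, ← ENNReal.rpow_mul,
          mul_inv_cancel₀ (by norm_num : (2:ℝ) ≠ 0), ENNReal.rpow_one]

lemma rr_weight (n : ℕ) (hn : 1 ≤ n) {b t : ℝ} (hb : 0 < b) (ht : 0 < t) :
    rr (volume : Measure (Rn n)) (fun x => ENNReal.ofReal (‖x‖ ^ (-b))) t ≤
      ENNReal.ofReal (((volume (Metric.ball (0:Rn n) 1)).toReal / t) ^ (b / n)) := by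
  have hnont : Nontrivial (Rn n) := by
    have : 0 < n := hn
    refine ⟨⟨EuclideanSpace.single ⟨0, this⟩ 1, 0, fun h => ?_⟩⟩
    have := congrArg (fun f : Rn n => f ⟨0, this⟩) h
    simp [EuclideanSpace.single_apply] at this
  set c₀ : ℝ := (volume (Metric.ball (0:Rn n) 1)).toReal with hc₀
  have hball_top : volume (Metric.ball (0:Rn n) 1) < ∞ := measure_ball_lt_top
  have hc₀pos : 0 < c₀ := by
    rw [hc₀]
    exact ENNReal.toReal_pos (ne_of_gt (Metric.measure_ball_pos volume 0 one_pos)) hball_top.ne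
  have hn0 : (0:ℝ) < n := by exact_mod_cast hn
  set R : ℝ := (t / c₀) ^ (n:ℝ)⁻¹ with hR
  have hRpos : 0 < R := Real.rpow_pos_of_pos (div_pos ht hc₀pos) _
  refine rr_le_of_mem _ ?_
  have hsub : {x : Rn n | ENNReal.ofReal ((c₀ / t) ^ (b / n)) < ENNReal.ofReal (‖x‖ ^ (-b))}
      ⊆ Metric.ball (0:Rn n) R := by
    intro x hx
    simp only [Set.mem_setOf_eq] at hx
    have hK : (0:ℝ) < (c₀ / t) ^ (b / n) := Real.rpow_pos_of_pos (div_pos hc₀pos ht) _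
    have hlt : (c₀ / t) ^ (b / n) < ‖x‖ ^ (-b) := by
      by_contra hcon
      push_neg at hcon
      exact absurd (ENNReal.ofReal_le_ofReal hcon) (not_le.mpr hx)
    have hxne : x ≠ 0 := by
      intro h0
      rw [h0] at hlt
      simp only [norm_zero] at hlt
      rw [Real.zero_rpow (neg_ne_zero.mpr hb.ne')] at hlt
      linarith
    have hxpos : 0 < ‖x‖ := norm_pos_iff.mpr hxne
    rw [Metric.mem_ball, dist_zero_right]
    by_contra hcon
    push_neg at hcon
    have hRb : ‖x‖ ^ (-b) ≤ R ^ (-b) :=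
      Real.rpow_le_rpow_of_nonpos hRpos hcon (by linarith)
    have hReq : R ^ (-b) = (c₀ / t) ^ (b / n) := by
      rw [hR, ← Real.rpow_mul (div_pos ht hc₀pos).le]
      rw [show (n:ℝ)⁻¹ * (-b) = -(b / n) by field_simp]
      rw [Real.rpow_neg (div_pos ht hc₀pos).le, ← Real.inv_rpow (div_pos ht hc₀pos).le,
        inv_div]
    rw [hReq] at hRb
    linarith
  refine le_trans (measure_mono hsub) ?_
  have hfr : Module.finrank ℝ (Rn n) = n := finrank_euclideanSpace_fin
  rw [Measure.addHaar_ball _ _ hRpos.le, hfr]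
  have hRn : R ^ (n:ℕ) = t / c₀ := by
    rw [hR, ← Real.rpow_natCast ((t / c₀) ^ (n:ℝ)⁻¹) n, ← Real.rpow_mul (div_pos ht hc₀pos).le,
      inv_mul_cancel₀ (ne_of_gt hn0), Real.rpow_one]
  rw [hRn, ← ENNReal.ofReal_toReal hball_top.ne, ← hc₀,
    ← ENNReal.ofReal_mul (div_pos ht hc₀pos).le]
  rw [div_mul_cancel₀ _ hc₀pos.ne']

lemma lintegral_Ioi_scale {g : ℝ → ℝ≥0∞} (hg : Measurable g) {c : ℝ} (hc : 0 < c) :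
    ∫⁻ t in Ioi (0:ℝ), g (c * t) = ENNReal.ofReal c⁻¹ * ∫⁻ s in Ioi (0:ℝ), g s := by
  have hmap := Real.map_volume_mul_left (ne_of_gt hc)
  have hF : Measurable ((Ioi (0:ℝ)).indicator g) :=
    hg.indicator measurableSet_Ioi
  have h1 : ∫⁻ x, (Ioi (0:ℝ)).indicator g x ∂(Measure.map (fun y => c * y) volume)
      = ∫⁻ x, (Ioi (0:ℝ)).indicator g (c * x) ∂volume :=
    lintegral_map hF (measurable_const_mul c)
  rw [hmap] at h1
  rw [lintegral_smul_measure] at h1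
  have h2 : ∀ x : ℝ, (Ioi (0:ℝ)).indicator g (c * x)
      = (Ioi (0:ℝ)).indicator (fun x => g (c * x)) x := by
    intro x
    by_cases hx : x ∈ Ioi (0:ℝ)
    · rw [Set.indicator_of_mem hx, Set.indicator_of_mem (by exact mul_pos hc hx : c * x ∈ Ioi 0)]
    · rw [Set.indicator_of_notMem hx, Set.indicator_of_notMem]
      intro hcx
      simp only [Set.mem_Ioi] at hcx hx
      nlinarith
  simp_rw [h2] at h1
  rw [lintegral_indicator measurableSet_Ioi, lintegral_indicator measurableSet_Ioi] at h1
  rw [← h1, abs_of_nonneg (inv_nonneg.mpr hc.le), smul_eq_mul]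

lemma aux_real {σ A B : ℝ} (hσ : 0 < σ) (hB : 0 ≤ B) (hBA : B ≤ A) :
    (A ^ σ - B ^ σ) * B ≤ max 1 σ * (A ^ σ * (A - B)) := by
  have hA : 0 ≤ A := hB.trans hBA
  rcases eq_or_lt_of_le hA with hA0 | hA0
  · have : A = 0 := hA0.symm
    have hB0 : B = 0 := le_antisymm (this ▸ hBA) hB
    simp [this, hB0]
  -- x = B / A ∈ [0,1]
  set x := B / A with hx
  have hx0 : 0 ≤ x := div_nonneg hB hA
  have hx1 : x ≤ 1 := div_le_one_of_le₀ hBA hA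
  have hBx : B = x * A := by rw [hx, div_mul_cancel₀ B hA0.ne']
  have key : (1 - x ^ σ) * x ≤ max 1 σ * (1 - x) := by
    have hxσ1 : x ^ σ ≤ 1 := Real.rpow_le_one hx0 hx1 hσ.le
    have h1 : (1 - x ^ σ) * x ≤ 1 - x ^ σ := by nlinarith
    rcases le_total σ 1 with hσ1 | hσ1
    · have : x ^ (1:ℝ) ≤ x ^ σ := by
        rcases eq_or_lt_of_le hx0 with h0 | h0
        · simp [← h0, Real.zero_rpow hσ.ne', Real.zero_rpow (one_ne_zero)]
        · exact Real.rpow_le_rpow_of_exponent_ge h0 hx1 hσ1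
      rw [Real.rpow_one] at this
      have : 1 - x ^ σ ≤ 1 - x := by linarith
      calc (1 - x ^ σ) * x ≤ 1 - x ^ σ := h1
        _ ≤ 1 - x := this
        _ ≤ max 1 σ * (1 - x) := by nlinarith [le_max_left (1:ℝ) σ]
    · have hbern : 1 + σ * (x - 1) ≤ (1 + (x - 1)) ^ σ :=
        one_add_mul_self_le_rpow_one_add (by linarith) hσ1
      have : 1 - x ^ σ ≤ σ * (1 - x) := by
        have : (1 + (x - 1)) = x := by ring
        rw [this] at hbern; linarith
      calc (1 - x ^ σ) * x ≤ 1 - x ^ σ := h1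
        _ ≤ σ * (1 - x) := this
        _ ≤ max 1 σ * (1 - x) := by nlinarith [le_max_right (1:ℝ) σ]
  have hxpow : B ^ σ = x ^ σ * A ^ σ := by
    rw [hBx, Real.mul_rpow hx0 hA]
  have hApos : 0 < A ^ σ := Real.rpow_pos_of_pos hA0 σ
  calc (A ^ σ - B ^ σ) * B = A ^ σ * A * ((1 - x ^ σ) * x) := by
        rw [hxpow, hBx]; ring
    _ ≤ A ^ σ * A * (max 1 σ * (1 - x)) := by
        have hAA : 0 ≤ A ^ σ * A := by positivity
        exact mul_le_mul_of_nonneg_left key hAA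
    _ = max 1 σ * (A ^ σ * (A - B)) := by
        rw [hBx]; ring

lemma pointwise_bound {σ : ℝ} (hσ : 0 < σ) (a c : ℂ) :
    ‖(‖a‖ ^ σ : ℝ) * a - (‖c‖ ^ σ : ℝ) * c‖ ≤
      (1 + max 1 σ) * ((‖a‖ ^ σ + ‖c‖ ^ σ) * ‖a - c‖) := by
  -- wlog ‖c‖ ≤ ‖a‖
  wlog hac : ‖c‖ ≤ ‖a‖ with H
  · have := H hσ c a (le_of_not_ge hac)
    calc ‖(‖a‖ ^ σ : ℝ) * a - (‖c‖ ^ σ : ℝ) * c‖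
        = ‖(‖c‖ ^ σ : ℝ) * c - (‖a‖ ^ σ : ℝ) * a‖ := by rw [norm_sub_rev]
      _ ≤ (1 + max 1 σ) * ((‖c‖ ^ σ + ‖a‖ ^ σ) * ‖c - a‖) := this
      _ = (1 + max 1 σ) * ((‖a‖ ^ σ + ‖c‖ ^ σ) * ‖a - c‖) := by rw [norm_sub_rev]; ring_nf
  have hA : (0:ℝ) ≤ ‖a‖ := norm_nonneg _
  have hC : (0:ℝ) ≤ ‖c‖ := norm_nonneg _
  have split : ((‖a‖ ^ σ : ℝ) : ℂ) * a - ((‖c‖ ^ σ : ℝ) : ℂ) * c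
      = ((‖a‖ ^ σ : ℝ) : ℂ) * (a - c) + ((‖a‖ ^ σ : ℝ) - (‖c‖ ^ σ : ℝ) : ℂ) * c := by
    push_cast; ring
  have h1 : ‖((‖a‖ ^ σ : ℝ) : ℂ) * (a - c)‖ = ‖a‖ ^ σ * ‖a - c‖ := by
    rw [norm_mul, Complex.norm_real, Real.norm_eq_abs, _root_.abs_of_nonneg (Real.rpow_nonneg hA σ)]
  have hpow : ‖c‖ ^ σ ≤ ‖a‖ ^ σ := Real.rpow_le_rpow hC hac hσ.le
  have h2 : ‖((‖a‖ ^ σ : ℝ) - (‖c‖ ^ σ : ℝ) : ℂ) * c‖ = (‖a‖ ^ σ - ‖c‖ ^ σ) * ‖c‖ := by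
    rw [norm_mul]
    norm_cast
    rw [Real.norm_eq_abs, _root_.abs_of_nonneg (by linarith : (0:ℝ) ≤ ‖a‖ ^ σ - ‖c‖ ^ σ)]
  have h3 : (‖a‖ ^ σ - ‖c‖ ^ σ) * ‖c‖ ≤ max 1 σ * (‖a‖ ^ σ * (‖a‖ - ‖c‖)) :=
    aux_real hσ hC hac
  have h4 : ‖a‖ - ‖c‖ ≤ ‖a - c‖ := by
    have := norm_sub_norm_le a c
    linarith
  have hmax : (0:ℝ) ≤ max 1 σ := le_trans zero_le_one (le_max_left _ _)
  have hAσ : (0:ℝ) ≤ ‖a‖ ^ σ := Real.rpow_nonneg hA σ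
  calc ‖(‖a‖ ^ σ : ℝ) * a - (‖c‖ ^ σ : ℝ) * c‖
      ≤ ‖((‖a‖ ^ σ : ℝ) : ℂ) * (a - c)‖ + ‖((‖a‖ ^ σ : ℝ) - (‖c‖ ^ σ : ℝ) : ℂ) * c‖ := by
        rw [split]; exact norm_add_le _ _
    _ = ‖a‖ ^ σ * ‖a - c‖ + (‖a‖ ^ σ - ‖c‖ ^ σ) * ‖c‖ := by rw [h1, h2]
    _ ≤ ‖a‖ ^ σ * ‖a - c‖ + max 1 σ * (‖a‖ ^ σ * ‖a - c‖) := by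
        have h5 := mul_le_mul_of_nonneg_left h4 (mul_nonneg hmax hAσ)
        nlinarith [h3, h5]
    _ ≤ (1 + max 1 σ) * ((‖a‖ ^ σ + ‖c‖ ^ σ) * ‖a - c‖) := by
        have hCσ : (0:ℝ) ≤ ‖c‖ ^ σ := Real.rpow_nonneg hC σ
        nlinarith [norm_nonneg (a - c), mul_nonneg hCσ (norm_nonneg (a - c)),
          mul_nonneg hmax (mul_nonneg hCσ (norm_nonneg (a - c)))]

lemma lornorm_eq (n : ℕ) {p : ℝ} (hp : 0 < p) (f : Rn n → ℂ) :
    lornorm n p f = (∫⁻ t in Ioi (0:ℝ),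
      (ENNReal.ofReal (t ^ p⁻¹) * rr volume (fun x => (‖f x‖₊ : ℝ≥0∞)) t) ^ (2:ℝ)
        * ENNReal.ofReal t⁻¹) ^ ((2:ℝ)⁻¹) := by
  have h2 : (2 : ℝ≥0∞) ≠ ∞ := by simp
  rw [lornorm, lorentzNorm, if_neg h2]
  have htr : (2 : ℝ≥0∞).toReal = (2:ℝ) := by simp
  rw [htr, ENNReal.toReal_ofReal hp.le]
  rfl

end
end NLaux

open MeasureTheory ENNReal Set NLaux in
/-- Lipschitz estimate for the inhomogeneous nonlinearity:
`‖|x|^{-b}(|u|^σ u − |v|^σ v)‖_{L^{r',2}} ≲ (‖u‖^σ + ‖v‖^σ)‖u − v‖` in `L^{r,2}`. -/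
theorem nonlinearity_lipschitz (n : ℕ) (hn : 1 ≤ n) (b σ r : ℝ)
    (hb : 0 < b) (hb2 : b < 2) (hbn : b < n) (hσ : 0 < σ)
    (hr : r = n * (σ + 2) / (n - b)) :
    ∃ C : ℝ≥0∞, C < ∞ ∧ ∀ u v : Rn n → ℂ, Measurable u → Measurable v →
      lornorm n (r / (r - 1)) (fun x => Complex.ofReal (‖x‖ ^ (-b)) *
          (Complex.ofReal (‖u x‖ ^ σ) * u x - Complex.ofReal (‖v x‖ ^ σ) * v x)) ≤
        C * (lornorm n r u ^ σ + lornorm n r v ^ σ) * lornorm n r (fun x => u x - v x) := by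
  classical
  have hn0 : (0:ℝ) < n := by exact_mod_cast hn
  have hnb : (0:ℝ) < (n:ℝ) - b := by linarith
  have hr2 : 2 < r := by
    rw [hr, lt_div_iff₀ hnb]; nlinarith
  have hrpos : (0:ℝ) < r := by linarith
  have hr1 : (0:ℝ) < r - 1 := by linarith
  have hr'pos : (0:ℝ) < r / (r - 1) := div_pos hrpos hr1
  have hrnb : r * ((n:ℝ) - b) = n * (σ + 2) := by
    rw [hr]; field_simp
  have hexp : (r / (r - 1))⁻¹ = b / n + (r⁻¹ * σ + r⁻¹) := by
    rw [inv_div]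
    field_simp
    nlinarith [hrnb]
  set c₀ : ℝ := (volume (Metric.ball (0:Rn n) 1)).toReal with hc₀
  set K1 : ℝ≥0∞ := ENNReal.ofReal (1 + max 1 σ) with hK1
  set K2 : ℝ≥0∞ := ENNReal.ofReal ((2:ℝ) ^ (r⁻¹ + 2⁻¹)) with hK2
  set C : ℝ≥0∞ := ENNReal.ofReal ((4 * c₀) ^ (b / n)) * K1 * ENNReal.ofReal ((2:ℝ) ^ r⁻¹)
      * (ENNReal.ofReal ((8:ℝ) ^ r⁻¹) * K2) ^ σ with hC
  have hK1ne : K1 ≠ 0 := by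
    rw [hK1]
    simp only [ne_eq, ENNReal.ofReal_eq_zero, not_le]
    have := le_max_left (1:ℝ) σ
    linarith
  have hK1top : K1 ≠ ∞ := ENNReal.ofReal_ne_top
  refine ⟨C, ?_, ?_⟩
  · rw [hC]
    refine ENNReal.mul_lt_top (ENNReal.mul_lt_top (ENNReal.mul_lt_top
      ENNReal.ofReal_lt_top (lt_top_iff_ne_top.mpr hK1top)) ENNReal.ofReal_lt_top) ?_
    exact ENNReal.rpow_lt_top_of_nonneg hσ.le
      (ENNReal.mul_ne_top ENNReal.ofReal_ne_top ENNReal.ofReal_ne_top)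
  intro u v hu hv
  set U : Rn n → ℝ≥0∞ := fun x => (‖u x‖₊ : ℝ≥0∞) with hU
  set V : Rn n → ℝ≥0∞ := fun x => (‖v x‖₊ : ℝ≥0∞) with hV
  set W : Rn n → ℝ≥0∞ := fun x => (‖u x - v x‖₊ : ℝ≥0∞) with hW
  set F : Rn n → ℝ≥0∞ := fun x => ENNReal.ofReal (‖x‖ ^ (-b)) with hF
  set h : Rn n → ℂ := fun x => Complex.ofReal (‖x‖ ^ (-b)) *
      (Complex.ofReal (‖u x‖ ^ σ) * u x - Complex.ofReal (‖v x‖ ^ σ) * v x) with hh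
  set H : Rn n → ℝ≥0∞ := fun x => (‖h x‖₊ : ℝ≥0∞) with hH
  -- pointwise bound
  have hpt : ∀ x, H x ≤ F x * ((K1 * (U x ^ σ + V x ^ σ)) * W x) := by
    intro x
    have hb1 : ‖h x‖ ≤ ‖x‖ ^ (-b) * ((1 + max 1 σ) * ((‖u x‖ ^ σ + ‖v x‖ ^ σ) * ‖u x - v x‖)) := by
      rw [hh]
      simp only
      rw [norm_mul, Complex.norm_real, Real.norm_eq_abs,
        abs_of_nonneg (Real.rpow_nonneg (norm_nonneg x) (-b))]
      exact mul_le_mul_of_nonneg_left (pointwise_bound hσ (u x) (v x))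
        (Real.rpow_nonneg (norm_nonneg x) (-b))
    calc H x = ENNReal.ofReal ‖h x‖ := (ofReal_norm (h x)).symm
      _ ≤ ENNReal.ofReal (‖x‖ ^ (-b) * ((1 + max 1 σ) * ((‖u x‖ ^ σ + ‖v x‖ ^ σ) * ‖u x - v x‖))) :=
          ENNReal.ofReal_le_ofReal hb1
      _ = F x * ((K1 * (U x ^ σ + V x ^ σ)) * W x) := by
          simp only [hF, hK1, hU, hV, hW]
          simp_rw [← ENNReal.ofReal_coe_nnreal, coe_nnnorm]
          rw [ENNReal.ofReal_rpow_of_nonneg (norm_nonneg (u x)) hσ.le,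
            ENNReal.ofReal_rpow_of_nonneg (norm_nonneg (v x)) hσ.le,
            ← ENNReal.ofReal_add (by positivity) (by positivity),
            ← ENNReal.ofReal_mul (by positivity : (0:ℝ) ≤ 1 + max 1 σ),
            ← ENNReal.ofReal_mul (by positivity),
            ← ENNReal.ofReal_mul (Real.rpow_nonneg (norm_nonneg x) (-b))]
          congr 1
          ring
  -- master rearrangement bound
  have hmaster : ∀ t : ℝ, 0 < t → rr volume H t ≤
      rr volume F (t/4) * (K1 * ((rr volume U (t/8)) ^ σ + (rr volume V (t/8)) ^ σ)
        * rr volume W (t/2)) := by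
    intro t ht
    have h4 : (0:ℝ) ≤ t/4 := by linarith
    have h8 : (0:ℝ) ≤ t/8 := by linarith
    have e1 : t = t/4 + (t/4 + (t/4 + t/4)) := by ring
    have s1 : rr volume H t ≤ rr volume F (t/4) *
        rr volume (fun x => (K1 * (U x ^ σ + V x ^ σ)) * W x) (t/4 + (t/4 + t/4)) := by
      calc rr volume H t = rr volume H (t/4 + (t/4 + (t/4 + t/4))) := by rw [← e1]
        _ ≤ _ := rr_mul volume hpt h4 (by linarith)
    have s2 : rr volume (fun x => (K1 * (U x ^ σ + V x ^ σ)) * W x) (t/4 + (t/4 + t/4)) ≤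
        rr volume (fun x => K1 * (U x ^ σ + V x ^ σ)) (t/4) * rr volume W (t/4 + t/4) :=
      rr_mul volume (fun x => le_refl _) h4 (by linarith)
    have s3 : rr volume (fun x => K1 * (U x ^ σ + V x ^ σ)) (t/4) ≤
        K1 * rr volume (fun x => U x ^ σ + V x ^ σ) (t/4) :=
      rr_const_mul volume hK1ne hK1top _
    have s4 : rr volume (fun x => U x ^ σ + V x ^ σ) (t/4) ≤
        (rr volume U (t/8)) ^ σ + (rr volume V (t/8)) ^ σ := by
      have e2 : t/4 = t/8 + t/8 := by ring
      calc rr volume (fun x => U x ^ σ + V x ^ σ) (t/4)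
          = rr volume (fun x => U x ^ σ + V x ^ σ) (t/8 + t/8) := by rw [← e2]
        _ ≤ rr volume (fun x => U x ^ σ) (t/8) + rr volume (fun x => V x ^ σ) (t/8) :=
            rr_add volume (fun x => le_refl _) h8 h8
        _ ≤ (rr volume U (t/8)) ^ σ + (rr volume V (t/8)) ^ σ :=
            add_le_add (rr_rpow volume hσ.le _) (rr_rpow volume hσ.le _)
    have s5 : rr volume W (t/4 + t/4) = rr volume W (t/2) := by congr 1; ring
    calc rr volume H t ≤ rr volume F (t/4) *
          (rr volume (fun x => K1 * (U x ^ σ + V x ^ σ)) (t/4) * rr volume W (t/4 + t/4)) :=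
          le_trans s1 (mul_le_mul_right s2 _)
      _ ≤ rr volume F (t/4) * (K1 * ((rr volume U (t/8)) ^ σ + (rr volume V (t/8)) ^ σ)
          * rr volume W (t/2)) := by
          rw [← s5]
          exact mul_le_mul_right (mul_le_mul_left (le_trans s3
            (mul_le_mul_right s4 _)) _) _
  -- lorentz norms via rr
  set Nu : ℝ≥0∞ := lornorm n r u with hNu'
  set Nv : ℝ≥0∞ := lornorm n r v with hNv'
  set Nw : ℝ≥0∞ := lornorm n r (fun x => u x - v x) with hNw'
  have hNu : Nu = (∫⁻ t in Ioi (0:ℝ),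
      (ENNReal.ofReal (t ^ r⁻¹) * rr volume U t) ^ (2:ℝ) * ENNReal.ofReal t⁻¹) ^ ((2:ℝ)⁻¹) := by
    rw [hNu', lornorm_eq n hrpos u]
  have hNv : Nv = (∫⁻ t in Ioi (0:ℝ),
      (ENNReal.ofReal (t ^ r⁻¹) * rr volume V t) ^ (2:ℝ) * ENNReal.ofReal t⁻¹) ^ ((2:ℝ)⁻¹) := by
    rw [hNv', lornorm_eq n hrpos v]
  have hNw : Nw = (∫⁻ t in Ioi (0:ℝ),
      (ENNReal.ofReal (t ^ r⁻¹) * rr volume W t) ^ (2:ℝ) * ENNReal.ofReal t⁻¹) ^ ((2:ℝ)⁻¹) := by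
    rw [hNw', lornorm_eq n hrpos (fun x => u x - v x)]
  have hUweak : ∀ s : ℝ, 0 < s → ENNReal.ofReal (s ^ r⁻¹) * rr volume U s ≤ K2 * Nu := by
    intro s hs
    rw [hNu, hK2]
    exact weak_bound volume U hrpos hs
  have hVweak : ∀ s : ℝ, 0 < s → ENNReal.ofReal (s ^ r⁻¹) * rr volume V s ≤ K2 * Nv := by
    intro s hs
    rw [hNv, hK2]
    exact weak_bound volume V hrpos hs
  have hWeight : ∀ s : ℝ, 0 < s → rr volume F s ≤ ENNReal.ofReal ((c₀ / s) ^ (b / n)) := by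
    intro s hs
    rw [hF, hc₀]
    exact rr_weight n hn hb hs
  -- per-time bound
  have hX : ∀ t : ℝ, 0 < t → ENNReal.ofReal (t ^ (r / (r - 1))⁻¹) * rr volume H t ≤
      (C * (Nu ^ σ + Nv ^ σ)) * (ENNReal.ofReal ((t/2) ^ r⁻¹) * rr volume W (t/2)) := by
    intro t ht
    have ht4 : (0:ℝ) < t/4 := by linarith
    have ht8 : (0:ℝ) < t/8 := by linarith
    have ht2 : (0:ℝ) < t/2 := by linarith
    have hsplit : ENNReal.ofReal (t ^ (r / (r - 1))⁻¹) = ENNReal.ofReal (t ^ (b / n)) *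
        (ENNReal.ofReal (t ^ r⁻¹) ^ σ * ENNReal.ofReal (t ^ r⁻¹)) := by
      rw [hexp, Real.rpow_add ht, Real.rpow_add ht,
        ENNReal.ofReal_mul (Real.rpow_nonneg ht.le _),
        ENNReal.ofReal_mul (Real.rpow_nonneg ht.le _),
        Real.rpow_mul ht.le r⁻¹ σ,
        ← ENNReal.ofReal_rpow_of_nonneg (Real.rpow_nonneg ht.le _) hσ.le]
    have hp1 : ENNReal.ofReal (t ^ (b / n)) * rr volume F (t/4) ≤
        ENNReal.ofReal ((4 * c₀) ^ (b / n)) := by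
      refine le_trans (mul_le_mul_right (hWeight (t/4) ht4) _) (le_of_eq ?_)
      rw [← ENNReal.ofReal_mul (Real.rpow_nonneg ht.le _),
        ← Real.mul_rpow ht.le (by positivity)]
      congr 2
      field_simp
    have hscale8 : ENNReal.ofReal (t ^ r⁻¹) =
        ENNReal.ofReal ((8:ℝ) ^ r⁻¹) * ENNReal.ofReal ((t/8) ^ r⁻¹) := by
      rw [← ENNReal.ofReal_mul (by positivity), ← Real.mul_rpow (by norm_num) (by linarith)]
      congr 2
      ring
    have hscale2 : ENNReal.ofReal (t ^ r⁻¹) =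
        ENNReal.ofReal ((2:ℝ) ^ r⁻¹) * ENNReal.ofReal ((t/2) ^ r⁻¹) := by
      rw [← ENNReal.ofReal_mul (by positivity), ← Real.mul_rpow (by norm_num) (by linarith)]
      congr 2
      ring
    have hpU : ENNReal.ofReal (t ^ r⁻¹) * rr volume U (t/8) ≤
        ENNReal.ofReal ((8:ℝ) ^ r⁻¹) * K2 * Nu := by
      rw [hscale8, mul_assoc, mul_assoc]
      exact mul_le_mul_right (hUweak (t/8) ht8) _
    have hpV : ENNReal.ofReal (t ^ r⁻¹) * rr volume V (t/8) ≤
        ENNReal.ofReal ((8:ℝ) ^ r⁻¹) * K2 * Nv := by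
      rw [hscale8, mul_assoc, mul_assoc]
      exact mul_le_mul_right (hVweak (t/8) ht8) _
    have hp2 : ENNReal.ofReal (t ^ r⁻¹) ^ σ * ((rr volume U (t/8)) ^ σ + (rr volume V (t/8)) ^ σ)
        ≤ (ENNReal.ofReal ((8:ℝ) ^ r⁻¹) * K2) ^ σ * (Nu ^ σ + Nv ^ σ) := by
      rw [mul_add, mul_add, ← ENNReal.mul_rpow_of_nonneg _ _ hσ.le,
        ← ENNReal.mul_rpow_of_nonneg _ _ hσ.le, ← ENNReal.mul_rpow_of_nonneg _ _ hσ.le,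
        ← ENNReal.mul_rpow_of_nonneg _ _ hσ.le]
      exact add_le_add (ENNReal.rpow_le_rpow hpU hσ.le) (ENNReal.rpow_le_rpow hpV hσ.le)
    calc ENNReal.ofReal (t ^ (r / (r - 1))⁻¹) * rr volume H t
        ≤ ENNReal.ofReal (t ^ (b / n)) * (ENNReal.ofReal (t ^ r⁻¹) ^ σ * ENNReal.ofReal (t ^ r⁻¹))
          * (rr volume F (t/4) * (K1 * ((rr volume U (t/8)) ^ σ + (rr volume V (t/8)) ^ σ)
            * rr volume W (t/2))) := by
          rw [hsplit]
          exact mul_le_mul_right (hmaster t ht) _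
      _ = (ENNReal.ofReal (t ^ (b / n)) * rr volume F (t/4)) * K1 *
          (ENNReal.ofReal (t ^ r⁻¹) ^ σ * ((rr volume U (t/8)) ^ σ + (rr volume V (t/8)) ^ σ)) *
          (ENNReal.ofReal (t ^ r⁻¹) * rr volume W (t/2)) := by ring
      _ ≤ ENNReal.ofReal ((4 * c₀) ^ (b / n)) * K1 *
          ((ENNReal.ofReal ((8:ℝ) ^ r⁻¹) * K2) ^ σ * (Nu ^ σ + Nv ^ σ)) *
          (ENNReal.ofReal (t ^ r⁻¹) * rr volume W (t/2)) := by
          exact mul_le_mul_left (mul_le_mul' (mul_le_mul_left hp1 _) hp2) _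
      _ = (C * (Nu ^ σ + Nv ^ σ)) * (ENNReal.ofReal ((t/2) ^ r⁻¹) * rr volume W (t/2)) := by
          rw [hscale2, hC]
          ring
  -- integral estimate
  set Y : ℝ → ℝ≥0∞ := fun s => ENNReal.ofReal (s ^ r⁻¹) * rr volume W s with hY
  set D : ℝ≥0∞ := C * (Nu ^ σ + Nv ^ σ) with hD
  have hsq : ∀ z : ℝ≥0∞, z ^ (2:ℝ) = z * z := fun z => by
    rw [show (2:ℝ) = ((2:ℕ):ℝ) by norm_num, ENNReal.rpow_natCast]
    ring
  have hYmeas : Measurable Y := by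
    refine Measurable.mul ?_ ((rr_antitone_fun volume W).measurable)
    exact (Real.continuous_rpow_const (inv_nonneg.mpr hrpos.le)).measurable.ennreal_ofReal
  set g : ℝ → ℝ≥0∞ := fun s => Y s ^ (2:ℝ) * ENNReal.ofReal s⁻¹ with hg
  have hgmeas : Measurable g := by
    have : g = fun s => (Y s * Y s) * ENNReal.ofReal s⁻¹ := by
      funext s
      rw [hg]
      simp only
      rw [hsq]
    rw [this]
    exact ((hYmeas.mul hYmeas).mul (measurable_inv.ennreal_ofReal))
  have hLHS : lornorm n (r / (r - 1)) h = (∫⁻ t in Ioi (0:ℝ),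
      (ENNReal.ofReal (t ^ (r / (r - 1))⁻¹) * rr volume H t) ^ (2:ℝ)
        * ENNReal.ofReal t⁻¹) ^ ((2:ℝ)⁻¹) := by
    rw [lornorm_eq n hr'pos h]
  have hint1 : ∫⁻ t in Ioi (0:ℝ), (ENNReal.ofReal (t ^ (r / (r - 1))⁻¹) * rr volume H t) ^ (2:ℝ)
        * ENNReal.ofReal t⁻¹ ≤ ∫⁻ t in Ioi (0:ℝ), (D * Y (t/2)) ^ (2:ℝ) * ENNReal.ofReal t⁻¹ := by
    refine setLIntegral_mono' measurableSet_Ioi fun t ht => ?_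
    exact mul_le_mul_left (ENNReal.rpow_le_rpow (hX t ht) (by norm_num)) _
  have hpoint : ∀ t : ℝ, 0 < t → (D * Y (t/2)) ^ (2:ℝ) * ENNReal.ofReal t⁻¹
      = D ^ (2:ℝ) * (ENNReal.ofReal 2⁻¹ * g (2⁻¹ * t)) := by
    intro t ht
    have h1 : g (2⁻¹ * t) = Y (t/2) ^ (2:ℝ) * ENNReal.ofReal (2⁻¹ * t)⁻¹ := by
      rw [hg]
      simp only
      congr 2 <;> ring
    have h2 : ENNReal.ofReal 2⁻¹ * ENNReal.ofReal (2⁻¹ * t)⁻¹ = ENNReal.ofReal t⁻¹ := by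
      rw [← ENNReal.ofReal_mul (by norm_num)]
      congr 1
      rw [mul_inv, inv_inv]
      field_simp
    rw [h1, ENNReal.mul_rpow_of_nonneg _ _ (by norm_num : (0:ℝ) ≤ 2)]
    calc D ^ (2:ℝ) * Y (t/2) ^ (2:ℝ) * ENNReal.ofReal t⁻¹
        = D ^ (2:ℝ) * Y (t/2) ^ (2:ℝ) * (ENNReal.ofReal 2⁻¹ * ENNReal.ofReal (2⁻¹ * t)⁻¹) := by
          rw [h2]
      _ = D ^ (2:ℝ) * (ENNReal.ofReal 2⁻¹ * (Y (t/2) ^ (2:ℝ) * ENNReal.ofReal (2⁻¹ * t)⁻¹)) := by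
          ring

  have hint2 : ∫⁻ t in Ioi (0:ℝ), (D * Y (t/2)) ^ (2:ℝ) * ENNReal.ofReal t⁻¹
      = D ^ (2:ℝ) * (ENNReal.ofReal 2⁻¹ * ∫⁻ t in Ioi (0:ℝ), g (2⁻¹ * t)) := by
    have hcong : ∫⁻ t in Ioi (0:ℝ), (D * Y (t/2)) ^ (2:ℝ) * ENNReal.ofReal t⁻¹
        = ∫⁻ t in Ioi (0:ℝ), D ^ (2:ℝ) * (ENNReal.ofReal 2⁻¹ * g (2⁻¹ * t)) := by
      refine setLIntegral_congr_fun measurableSet_Ioi (fun t ht => ?_)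
      exact hpoint t ht
    rw [hcong]
    have hm1 : Measurable fun t : ℝ => ENNReal.ofReal 2⁻¹ * g (2⁻¹ * t) :=
      measurable_const.mul (hgmeas.comp (measurable_const_mul 2⁻¹))
    have hm2 : Measurable fun t : ℝ => g (2⁻¹ * t) := hgmeas.comp (measurable_const_mul 2⁻¹)
    rw [lintegral_const_mul _ hm1]
    congr 1
    rw [lintegral_const_mul _ hm2]
  have hscale : ∫⁻ t in Ioi (0:ℝ), g (2⁻¹ * t) = ENNReal.ofReal 2 * ∫⁻ s in Ioi (0:ℝ), g s := by
    have := lintegral_Ioi_scale hgmeas (show (0:ℝ) < 2⁻¹ by norm_num)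
    rw [this]
    norm_num
  have hgNw : ∫⁻ s in Ioi (0:ℝ), g s = Nw ^ (2:ℝ) := by
    rw [hNw, ← ENNReal.rpow_mul]
    norm_num
  have hfinal : ∫⁻ t in Ioi (0:ℝ), (ENNReal.ofReal (t ^ (r / (r - 1))⁻¹) * rr volume H t) ^ (2:ℝ)
        * ENNReal.ofReal t⁻¹ ≤ D ^ (2:ℝ) * Nw ^ (2:ℝ) := by
    refine le_trans hint1 (le_of_eq ?_)
    rw [hint2, hscale, hgNw]
    have h1 : ENNReal.ofReal 2⁻¹ * ENNReal.ofReal 2 = 1 := by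
      rw [← ENNReal.ofReal_mul (by norm_num)]
      norm_num
    calc D ^ (2:ℝ) * (ENNReal.ofReal 2⁻¹ * (ENNReal.ofReal 2 * Nw ^ (2:ℝ)))
        = D ^ (2:ℝ) * ((ENNReal.ofReal 2⁻¹ * ENNReal.ofReal 2) * Nw ^ (2:ℝ)) := by ring
      _ = D ^ (2:ℝ) * Nw ^ (2:ℝ) := by rw [h1, one_mul]
  rw [hLHS]
  calc (∫⁻ t in Ioi (0:ℝ), (ENNReal.ofReal (t ^ (r / (r - 1))⁻¹) * rr volume H t) ^ (2:ℝ)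
        * ENNReal.ofReal t⁻¹) ^ ((2:ℝ)⁻¹)
      ≤ (D ^ (2:ℝ) * Nw ^ (2:ℝ)) ^ ((2:ℝ)⁻¹) := ENNReal.rpow_le_rpow hfinal (by norm_num)
    _ = D * Nw := by
        rw [ENNReal.mul_rpow_of_nonneg _ _ (by norm_num : (0:ℝ) ≤ 2⁻¹), ← ENNReal.rpow_mul,
          ← ENNReal.rpow_mul]
        norm_num
end
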